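/- arXiv:1402.4957 — 3 statements merged into one kernel-verified Lean document; each statement's English description precedes it below -/
import Mathlib

section
/- Let x : ℝ³ × ℝ → ℝ³ be smooth in (a,t). Then for each fixed a, the time derivative of the vector field ∑ₖ ∇ᴸ ẋₖ × ∇ᴸ xₖ (sum over k = 1,2,3, with ẋ = ∂ₜ x) equals the Lagrangian curl of ∑ₖ ẍₖ ∇ᴸ xₖ, i.e. ∂ₜ (∑ₖ ∇ᴸ ẋₖ × ∇ᴸ xₖ) = ∇ᴸ × (∑ₖ ẍₖ ∇ᴸ xₖ). -/
open Matrix MeasureTheory intervalIntegral Asymptotics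
open scoped Topology

noncomputable section

/-- Points of `ℝ³`. -/
abbrev V3 := Fin 3 → ℝ

/-- Partial derivative in direction `i` of a scalar function on `ℝ³`. -/
noncomputable def pd (i : Fin 3) (f : V3 → ℝ) (a : V3) : ℝ :=
  fderiv ℝ f a (Pi.single i 1)

/-- Gradient of a scalar function on `ℝ³`. -/
noncomputable def grad3 (f : V3 → ℝ) (a : V3) : V3 := fun i => pd i f a

/-- Curl of a vector field on `ℝ³`. -/
noncomputable def curl3 (F : V3 → V3) (a : V3) : V3 :=
  ![pd 1 (fun b => F b 2) a - pd 2 (fun b => F b 1) a,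
    pd 2 (fun b => F b 0) a - pd 0 (fun b => F b 2) a,
    pd 0 (fun b => F b 1) a - pd 1 (fun b => F b 0) a]

/-- Divergence of a vector field on `ℝ³`. -/
noncomputable def div3 (F : V3 → V3) (a : V3) : ℝ :=
  ∑ i, pd i (fun b => F b i) a

/-- Lagrangian time derivative `ẋ(a,t)`. -/
noncomputable def tder (x : V3 × ℝ → V3) (a : V3) (t : ℝ) : V3 :=
  deriv (fun s => x (a, s)) t

/-- Second Lagrangian time derivative `ẍ(a,t)`. -/
noncomputable def tder2 (x : V3 × ℝ → V3) (a : V3) (t : ℝ) : V3 :=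
  deriv (fun s => tder x a s) t

/-- Jacobian matrix `∂xᵢ/∂aⱼ` of a map `ℝ³ → ℝ³`. -/
noncomputable def jacobian (x : V3 → V3) (a : V3) : Matrix (Fin 3) (Fin 3) ℝ :=
  Matrix.of fun i j => pd j (fun b => x b i) a

/-! ### Auxiliary machinery -/

abbrev E3 := V3 × ℝ

def ei (i : Fin 3) : E3 := ((Pi.single i 1 : V3), (0 : ℝ))
def eT : E3 := ((0 : V3), (1 : ℝ))

noncomputable def Dd (v : E3) (f : E3 → ℝ) : E3 → ℝ := fun p => fderiv ℝ f p v

lemma Dd_smooth (v : E3) {f : E3 → ℝ} (hf : ContDiff ℝ (⊤ : ℕ∞) f) : ContDiff ℝ (⊤ : ℕ∞) (Dd v f) :=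
  (hf.fderiv_right (by simp)).clm_apply contDiff_const

lemma Dd_swap (v w : E3) {f : E3 → ℝ} (hf : ContDiff ℝ (⊤ : ℕ∞) f) (p : E3) :
    Dd v (Dd w f) p = Dd w (Dd v f) p := by
  have hdf : ContDiff ℝ (⊤ : ℕ∞) (fderiv ℝ f) := hf.fderiv_right (by simp)
  have key : ∀ u z : E3, Dd u (Dd z f) p = fderiv ℝ (fderiv ℝ f) p u z := by
    intro u z
    have h := ((ContinuousLinearMap.apply ℝ ℝ z).hasFDerivAt.comp p
      (hdf.differentiable (by simp) p).hasFDerivAt)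
    have h' : HasFDerivAt (fun q => fderiv ℝ f q z)
        (((ContinuousLinearMap.apply ℝ ℝ) z).comp (fderiv ℝ (fderiv ℝ f) p)) p := h
    show fderiv ℝ (fun q => fderiv ℝ f q z) p u = _
    rw [h'.fderiv]
    rfl
  rw [key v w, key w v]
  exact hf.contDiffAt.isSymmSndFDerivAt (by rw [minSmoothness_of_isRCLikeNormedField]; exact WithTop.coe_le_coe.mpr (le_top : (2 : ℕ∞) ≤ ⊤)) v w

lemma Dd_mul {f g : E3 → ℝ} (hf : ContDiff ℝ (⊤ : ℕ∞) f) (hg : ContDiff ℝ (⊤ : ℕ∞) g) (v : E3) (p : E3) :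
    Dd v (fun q => f q * g q) p = Dd v f p * g p + f p * Dd v g p := by
  unfold Dd
  rw [fderiv_fun_mul (hf.differentiable (by simp) p) (hg.differentiable (by simp) p)]
  simp [ContinuousLinearMap.add_apply]
  ring

lemma Dd_sum {f : Fin 3 → E3 → ℝ} (hf : ∀ k, ContDiff ℝ (⊤ : ℕ∞) (f k)) (v : E3) (p : E3) :
    Dd v (fun q => ∑ k, f k q) p = ∑ k, Dd v (f k) p := by
  unfold Dd
  rw [fderiv_fun_sum fun k _ => (hf k).differentiable (by simp) p]
  simp

lemma Dd_sum_mul {f g : Fin 3 → E3 → ℝ} (hf : ∀ k, ContDiff ℝ (⊤ : ℕ∞) (f k))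
    (hg : ∀ k, ContDiff ℝ (⊤ : ℕ∞) (g k)) (v : E3) (p : E3) :
    Dd v (fun q => ∑ k, f k q * g k q) p
      = ∑ k, (Dd v (f k) p * g k p + f k p * Dd v (g k) p) := by
  rw [Dd_sum (f := fun k q => f k q * g k q) (fun k => (hf k).mul (hg k)) v p]
  exact Finset.sum_congr rfl fun k _ => Dd_mul (hf k) (hg k) v p

lemma hasDerivAt_slice {f : E3 → ℝ} (hf : Differentiable ℝ f) (a : V3) (t : ℝ) :
    HasDerivAt (fun s => f (a, s)) (Dd eT f (a, t)) t := by
  have h1 : HasDerivAt (fun s : ℝ => ((a, s) : E3)) (((0 : V3), (1 : ℝ)) : E3) t :=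
    (hasDerivAt_const t a).prodMk (hasDerivAt_id t)
  exact (hf (a, t)).hasFDerivAt.comp_hasDerivAt t h1

lemma pd_slice {f : E3 → ℝ} (hf : Differentiable ℝ f) (i : Fin 3) (a : V3) (t : ℝ) :
    pd i (fun b : V3 => f (b, t)) a = Dd (ei i) f (a, t) := by
  have h1 : HasFDerivAt (fun b : V3 => ((b, t) : E3)) (ContinuousLinearMap.inl ℝ V3 ℝ) a :=
    hasFDerivAt_prodMk_left a t
  have h' : HasFDerivAt (fun b : V3 => f (b, t))
      ((fderiv ℝ f (a, t)).comp (ContinuousLinearMap.inl ℝ V3 ℝ)) a :=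
    (hf (a, t)).hasFDerivAt.comp a h1
  show fderiv ℝ (fun b : V3 => f (b, t)) a (Pi.single i 1) = _
  rw [h'.fderiv]
  rfl

lemma tder_apply {x : V3 × ℝ → V3} (hx : ContDiff ℝ (⊤ : ℕ∞) x) (a : V3) (s : ℝ) (k : Fin 3) :
    tder x a s k = Dd eT (fun p => x p k) (a, s) := by
  have h : HasDerivAt (fun σ : ℝ => x (a, σ))
      (fun k => Dd eT (fun p => x p k) (a, s)) s :=
    hasDerivAt_pi.mpr fun k =>
      hasDerivAt_slice ((contDiff_pi.mp hx k).differentiable (by simp)) a s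
  simp only [tder, h.deriv]

lemma tder2_apply {x : V3 × ℝ → V3} (hx : ContDiff ℝ (⊤ : ℕ∞) x) (a : V3) (t : ℝ) (k : Fin 3) :
    tder2 x a t k = Dd eT (Dd eT (fun p => x p k)) (a, t) := by
  have hT : ∀ k, ContDiff ℝ (⊤ : ℕ∞) (Dd eT (fun p : E3 => x p k)) :=
    fun k => Dd_smooth eT (contDiff_pi.mp hx k)
  have h2 : (fun s : ℝ => tder x a s)
      = fun s => fun k => Dd eT (fun p => x p k) (a, s) := by
    funext s k; exact tder_apply hx a s k
  have h : HasDerivAt (fun s : ℝ => tder x a s)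
      (fun k => Dd eT (Dd eT (fun p => x p k)) (a, t)) t := by
    rw [h2]
    exact hasDerivAt_pi.mpr fun k => hasDerivAt_slice ((hT k).differentiable (by simp)) a t
  simp only [tder2, h.deriv]

/-- `∂ₜ (∑ₖ ∇ᴸẋₖ × ∇ᴸxₖ) = ∇ᴸ × (∑ₖ ẍₖ ∇ᴸxₖ)`. -/
theorem tderiv_invariants_eq_curl
    (x : V3 × ℝ → V3) (hx : ContDiff ℝ (⊤ : ℕ∞) x) :
    ∀ (a : V3) (t : ℝ),
      deriv (fun s => ∑ k : Fin 3,
          crossProduct (grad3 (fun b => tder x b s k) a) (grad3 (fun b => x (b, s) k) a)) t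
        = curl3 (fun b => ∑ k : Fin 3, tder2 x b t k • grad3 (fun c => x (c, t) k) b) a := by
  intro a t
  have hX : ∀ k : Fin 3, ContDiff ℝ (⊤ : ℕ∞) (fun p : E3 => x p k) := fun k => contDiff_pi.mp hx k
  have hT : ∀ k : Fin 3, ContDiff ℝ (⊤ : ℕ∞) (Dd eT (fun p : E3 => x p k)) :=
    fun k => Dd_smooth eT (hX k)
  have hT2 : ∀ k : Fin 3, ContDiff ℝ (⊤ : ℕ∞) (Dd eT (Dd eT (fun p : E3 => x p k))) :=
    fun k => Dd_smooth eT (hT k)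
  have hA : ∀ (k j : Fin 3), ContDiff ℝ (⊤ : ℕ∞) (Dd (ei j) (fun p : E3 => x p k)) :=
    fun k j => Dd_smooth (ei j) (hX k)
  have hB : ∀ (k j : Fin 3), ContDiff ℝ (⊤ : ℕ∞) (Dd (ei j) (Dd eT (fun p : E3 => x p k))) :=
    fun k j => Dd_smooth (ei j) (hT k)
  -- Step A: rewrite the function of `s` under the `deriv`
  have hgradx : ∀ (s : ℝ) (k : Fin 3),
      grad3 (fun b => x (b, s) k) a = fun j => Dd (ei j) (fun p : E3 => x p k) (a, s) := by
    intro s k; funext j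
    exact pd_slice ((hX k).differentiable (by simp)) j a s
  have hgradt : ∀ (s : ℝ) (k : Fin 3),
      grad3 (fun b => tder x b s k) a
        = fun j => Dd (ei j) (Dd eT (fun p : E3 => x p k)) (a, s) := by
    intro s k; funext j
    have h1 : (fun b => tder x b s k) = fun b => Dd eT (fun p : E3 => x p k) (b, s) :=
      funext fun b => tder_apply hx b s k
    show pd j (fun b => tder x b s k) a = _
    rw [h1]
    exact pd_slice ((hT k).differentiable (by simp)) j a s
  have hfun : (fun s => ∑ k : Fin 3,
        crossProduct (grad3 (fun b => tder x b s k) a) (grad3 (fun b => x (b, s) k) a))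
      = fun s => ∑ k : Fin 3,
        crossProduct (fun j => Dd (ei j) (Dd eT (fun p : E3 => x p k)) (a, s))
          (fun j => Dd (ei j) (fun p : E3 => x p k) (a, s)) := by
    funext s
    refine Finset.sum_congr rfl fun k _ => ?_
    rw [hgradx s k, hgradt s k]
  -- Step B: differentiate
  have hder : HasDerivAt (fun s => ∑ k : Fin 3,
        crossProduct (fun j => Dd (ei j) (Dd eT (fun p : E3 => x p k)) (a, s))
          (fun j => Dd (ei j) (fun p : E3 => x p k) (a, s)))
      (∑ k : Fin 3,
        (![Dd eT (Dd (ei 1) (Dd eT (fun p : E3 => x p k))) (a, t)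
              * Dd (ei 2) (fun p : E3 => x p k) (a, t)
            + Dd (ei 1) (Dd eT (fun p : E3 => x p k)) (a, t)
              * Dd eT (Dd (ei 2) (fun p : E3 => x p k)) (a, t)
            - (Dd eT (Dd (ei 2) (Dd eT (fun p : E3 => x p k))) (a, t)
              * Dd (ei 1) (fun p : E3 => x p k) (a, t)
            + Dd (ei 2) (Dd eT (fun p : E3 => x p k)) (a, t)
              * Dd eT (Dd (ei 1) (fun p : E3 => x p k)) (a, t)),
           Dd eT (Dd (ei 2) (Dd eT (fun p : E3 => x p k))) (a, t)
              * Dd (ei 0) (fun p : E3 => x p k) (a, t)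
            + Dd (ei 2) (Dd eT (fun p : E3 => x p k)) (a, t)
              * Dd eT (Dd (ei 0) (fun p : E3 => x p k)) (a, t)
            - (Dd eT (Dd (ei 0) (Dd eT (fun p : E3 => x p k))) (a, t)
              * Dd (ei 2) (fun p : E3 => x p k) (a, t)
            + Dd (ei 0) (Dd eT (fun p : E3 => x p k)) (a, t)
              * Dd eT (Dd (ei 2) (fun p : E3 => x p k)) (a, t)),
           Dd eT (Dd (ei 0) (Dd eT (fun p : E3 => x p k))) (a, t)
              * Dd (ei 1) (fun p : E3 => x p k) (a, t)
            + Dd (ei 0) (Dd eT (fun p : E3 => x p k)) (a, t)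
              * Dd eT (Dd (ei 1) (fun p : E3 => x p k)) (a, t)
            - (Dd eT (Dd (ei 1) (Dd eT (fun p : E3 => x p k))) (a, t)
              * Dd (ei 0) (fun p : E3 => x p k) (a, t)
            + Dd (ei 1) (Dd eT (fun p : E3 => x p k)) (a, t)
              * Dd eT (Dd (ei 0) (fun p : E3 => x p k)) (a, t))] : V3)) t := by
    refine HasDerivAt.fun_sum fun k _ => ?_
    refine hasDerivAt_pi.mpr fun i => ?_
    fin_cases i <;>
      simp only [cross_apply, Matrix.cons_val_zero, Matrix.cons_val_one, Matrix.head_cons,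
        Matrix.cons_val_two, Matrix.tail_cons, Fin.isValue] <;>
      exact
        (((hasDerivAt_slice ((hB k _).differentiable (by simp)) a t).mul
            (hasDerivAt_slice ((hA k _).differentiable (by simp)) a t)).sub
          ((hasDerivAt_slice ((hB k _).differentiable (by simp)) a t).mul
            (hasDerivAt_slice ((hA k _).differentiable (by simp)) a t)))
  rw [hfun, hder.deriv]
  -- Step C: compute the curl on the right-hand side
  have hF : ∀ j : Fin 3,
      (fun b => (∑ k : Fin 3, tder2 x b t k • grad3 (fun c => x (c, t) k) b) j)
        = fun b => (∑ k : Fin 3, Dd eT (Dd eT (fun p : E3 => x p k)) (b, t)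
            * Dd (ei j) (fun p : E3 => x p k) (b, t)) := by
    intro j; funext b
    simp only [Finset.sum_apply, Pi.smul_apply, smul_eq_mul]
    refine Finset.sum_congr rfl fun k _ => ?_
    rw [tder2_apply hx b t k]
    congr 1
    exact pd_slice ((hX k).differentiable (by simp)) j b t
  have hpdF : ∀ (i j : Fin 3),
      pd i (fun b => (∑ k : Fin 3, tder2 x b t k • grad3 (fun c => x (c, t) k) b) j) a
        = ∑ k : Fin 3,
            (Dd (ei i) (Dd eT (Dd eT (fun p : E3 => x p k))) (a, t)
                * Dd (ei j) (fun p : E3 => x p k) (a, t)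
              + Dd eT (Dd eT (fun p : E3 => x p k)) (a, t)
                * Dd (ei i) (Dd (ei j) (fun p : E3 => x p k)) (a, t)) := by
    intro i j
    rw [hF j]
    have hG : ContDiff ℝ (⊤ : ℕ∞) (fun p : E3 => ∑ k : Fin 3,
        Dd eT (Dd eT (fun p : E3 => x p k)) p * Dd (ei j) (fun p : E3 => x p k) p) :=
      ContDiff.sum fun k _ => (hT2 k).mul (hA k j)
    have hps := pd_slice (f := fun p : E3 => ∑ k : Fin 3,
        Dd eT (Dd eT (fun p : E3 => x p k)) p * Dd (ei j) (fun p : E3 => x p k) p)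
      (hG.differentiable (by simp)) i a t
    rw [hps]
    exact Dd_sum_mul (fun k => hT2 k) (fun k => hA k j) (ei i) (a, t)
  -- Step D: compare, component by component
  funext i
  fin_cases i
  · rw [show (⟨0, by omega⟩ : Fin 3) = 0 from rfl, Finset.sum_apply]
    simp only [curl3, Matrix.cons_val_zero]
    rw [hpdF 1 2, hpdF 2 1, ← Finset.sum_sub_distrib]
    apply Finset.sum_congr rfl
    intro k _
    rw [Dd_swap eT (ei 1) (hT k) (a, t), Dd_swap eT (ei 2) (hT k) (a, t),
      Dd_swap eT (ei 1) (hX k) (a, t), Dd_swap eT (ei 2) (hX k) (a, t),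
      Dd_swap (ei 1) (ei 2) (hX k) (a, t)]
    ring
  · rw [show (⟨1, by omega⟩ : Fin 3) = 1 from rfl, Finset.sum_apply]
    simp only [curl3, Matrix.cons_val_one, Matrix.head_cons, Matrix.cons_val_zero]
    rw [hpdF 2 0, hpdF 0 2, ← Finset.sum_sub_distrib]
    apply Finset.sum_congr rfl
    intro k _
    rw [Dd_swap eT (ei 2) (hT k) (a, t), Dd_swap eT (ei 0) (hT k) (a, t),
      Dd_swap eT (ei 2) (hX k) (a, t), Dd_swap eT (ei 0) (hX k) (a, t),
      Dd_swap (ei 2) (ei 0) (hX k) (a, t)]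
    ring
  · rw [show (⟨2, by omega⟩ : Fin 3) = 2 from rfl, Finset.sum_apply]
    simp only [curl3, Matrix.cons_val_two, Matrix.tail_cons, Matrix.head_cons]
    rw [hpdF 0 1, hpdF 1 0, ← Finset.sum_sub_distrib]
    apply Finset.sum_congr rfl
    intro k _
    rw [Dd_swap eT (ei 0) (hT k) (a, t), Dd_swap eT (ei 1) (hT k) (a, t),
      Dd_swap eT (ei 0) (hX k) (a, t), Dd_swap eT (ei 1) (hX k) (a, t),
      Dd_swap (ei 0) (ei 1) (hX k) (a, t)]
    ring
end
end

section
/- (Cauchy's vorticity formula from the invariants) Let x : ℝ³ × ℝ → ℝ³ be smooth with x(·,0) = id and det(∇ᴸ x) = 1 for all t, let u(·,t) be the Eulerian velocity with ∂ₜ x(a,t) = u(x(a,t),t), and suppose the Cauchy invariants equation ∑ₖ ∇ᴸ ẋₖ × ∇ᴸ xₖ = ω₀ holds with ω₀ = ∇ × u(·,0). Then the Eulerian vorticity ω(·,t) = ∇ × u(·,t) satisfies ω(x(a,t),t) = (∇ᴸ x(a,t)) ω₀(a) for all (a,t). -/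
open Matrix MeasureTheory intervalIntegral Asymptotics
open scoped Topology

noncomputable section

/-- Algebraic cofactor identity: for a `3×3` matrix `J` with `det J = 1` and vectors
`g k`, the image under `J` of `∑ k (Jᵀ gₖ) × (row k of J)` is the "curl-like" vector
built out of the `g k`. -/
lemma aux_cofactor_identity (J : Matrix (Fin 3) (Fin 3) ℝ) (hJ : J.det = 1)
    (g : Fin 3 → V3) :
    J.mulVec (∑ k, crossProduct (J.transpose.mulVec (g k)) (fun j => J k j))
      = ![g 2 1 - g 1 2, g 0 2 - g 2 0, g 1 0 - g 0 1] := by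
  rw [Matrix.det_fin_three] at hJ
  ext i
  fin_cases i <;>
    simp [Matrix.mulVec, crossProduct, dotProduct, Fin.sum_univ_three,
      Matrix.transpose_apply] <;>
  [linear_combination (g 2 1 - g 1 2) * hJ;
   linear_combination (g 0 2 - g 2 0) * hJ;
   linear_combination (g 1 0 - g 0 1) * hJ]

/-- Chain rule for `grad3`: `∇(f ∘ φ)(a) = (∇φ(a))ᵀ (∇f)(φ a)`. -/
lemma aux_grad_comp (f : V3 → ℝ) (φ : V3 → V3) (hf : Differentiable ℝ f)
    (hφ : Differentiable ℝ φ) (a : V3) :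
    grad3 (fun b => f (φ b)) a = (jacobian φ a).transpose.mulVec (grad3 f (φ a)) := by
  funext j
  have hcomp : fderiv ℝ (fun b => f (φ b)) a
      = (fderiv ℝ f (φ a)).comp (fderiv ℝ φ a) := fderiv_comp a (hf _) (hφ a)
  have hpi : fderiv ℝ φ a
      = ContinuousLinearMap.pi fun i => fderiv ℝ (fun b => φ b i) a :=
    fderiv_pi fun i => (differentiable_pi.1 hφ i) a
  set v : V3 := fderiv ℝ φ a (Pi.single j 1) with hv
  have hvi : ∀ i, v i = pd j (fun b => φ b i) a := by
    intro i
    rw [hv, hpi, pd]; rfl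
  have hvsum : v = ∑ i, v i • (Pi.single i 1 : V3) := by
    funext i
    simp [Finset.sum_apply, Pi.single_apply]
  show fderiv ℝ (fun b => f (φ b)) a (Pi.single j 1) = _
  rw [hcomp]
  show fderiv ℝ f (φ a) v = _
  rw [hvsum, map_sum]
  simp only [_root_.map_smul, smul_eq_mul]
  rw [Matrix.mulVec]
  show _ = ∑ i, (jacobian φ a).transpose j i * grad3 f (φ a) i
  refine Finset.sum_congr rfl fun i _ => ?_
  rw [hvi i]
  show pd j (fun b => φ b i) a * pd i f (φ a)
    = pd j (fun b => φ b i) a * pd i f (φ a)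
  ring

/-- Cauchy's vorticity formula: under the Cauchy invariants equation and
incompressibility, the Eulerian vorticity satisfies `ω(x(a,t),t) = (∇ᴸx) ω₀(a)`. -/
theorem cauchy_vorticity_formula
    (x u : V3 × ℝ → V3)
    (hx : ContDiff ℝ (⊤ : ℕ∞) x) (hu : ContDiff ℝ (⊤ : ℕ∞) u)
    (hx0 : ∀ a, x (a, 0) = a)
    (hdet : ∀ (a : V3) (t : ℝ), (jacobian (fun b => x (b, t)) a).det = 1)
    (hvel : ∀ (a : V3) (t : ℝ), tder x a t = u (x (a, t), t))
    (hinv : ∀ (a : V3) (t : ℝ),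
      (∑ k : Fin 3,
          crossProduct (grad3 (fun b => tder x b t k) a) (grad3 (fun b => x (b, t) k) a))
        = curl3 (fun b => u (b, 0)) a) :
    ∀ (a : V3) (t : ℝ),
      curl3 (fun y => u (y, t)) (x (a, t))
        = (jacobian (fun b => x (b, t)) a).mulVec (curl3 (fun b => u (b, 0)) a) := by
  intro a t
  set J := jacobian (fun b => x (b, t)) a with hJ
  set g : Fin 3 → V3 := fun k => grad3 (fun y => u (y, t) k) (x (a, t)) with hg
  -- differentiability of the time-`t` slices
  have hslice : ContDiff ℝ (⊤ : ℕ∞) (fun b : V3 => (b, t)) := contDiff_id.prodMk contDiff_const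
  have hφ : Differentiable ℝ (fun b => x (b, t)) :=
    (hx.comp hslice).differentiable (by simp)
  have hfk : ∀ k : Fin 3, Differentiable ℝ (fun y => u (y, t) k) := fun k =>
    (((contDiff_pi.1 hu k).comp hslice)).differentiable (by simp)
  -- rewrite the Cauchy invariants using the chain rule
  have h1 : ∀ k : Fin 3, grad3 (fun b => tder x b t k) a = J.transpose.mulVec (g k) := by
    intro k
    have he : (fun b => tder x b t k) = fun b => (fun y => u (y, t) k) (x (b, t)) := by
      funext b; rw [hvel]
    rw [he]
    exact aux_grad_comp _ _ (hfk k) hφ a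
  have h2 : ∀ k : Fin 3, grad3 (fun b => x (b, t) k) a = fun j => J k j := by
    intro k; rfl
  have hinv' : (∑ k : Fin 3, crossProduct (J.transpose.mulVec (g k)) (fun j => J k j))
      = curl3 (fun b => u (b, 0)) a := by
    rw [← hinv a t]
    exact Finset.sum_congr rfl fun k _ => by rw [h1 k, h2 k]
  have hcurl : curl3 (fun y => u (y, t)) (x (a, t))
      = ![g 2 1 - g 1 2, g 0 2 - g 2 0, g 1 0 - g 0 1] := rfl
  rw [hcurl, ← aux_cofactor_identity J (hdet a t) g, hinv']
end
end

section
/- (Circulation form of Cauchy's invariants / Hankel–Kelvin for exact forms) Let x : ℝ³ × ℝ → ℝ³ be smooth and suppose there exists a smooth function W : ℝ³ × ℝ → ℝ such that for all (a,t), ∑ₖ ẋₖ(a,t) ∇ᴸ xₖ(a,t) = v₀(a) - ∇ᴸ W(a,t) (the Weber form). Then for any closed C¹ loop γ : [0,1] → ℝ³ with γ(0) = γ(1), the circulation of the Eulerian velocity around the transported loop equals the initial circulation: ∫₀¹ ⟨ẋ(γ(s),t), ∂ₛ(x(γ(s),t))⟩ ds = ∫₀¹ ⟨v₀(γ(s)),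 γ'(s)⟩ ds for all t. -/
open Matrix MeasureTheory intervalIntegral Asymptotics
open scoped Topology

noncomputable section

lemma grad3_dot (f : V3 → ℝ) (a v : V3) :
    grad3 f a ⬝ᵥ v = fderiv ℝ f a v := by
  have hv : v = ∑ i, v i • (Pi.single i 1 : V3) := by
    funext j; simp [Finset.sum_apply, Pi.single_apply]
  conv_rhs => rw [hv]
  rw [map_sum]
  simp [dotProduct, grad3, pd, mul_comm]

lemma tder_eq (x : V3 × ℝ → V3) (hx : Differentiable ℝ x) (a : V3) (t : ℝ) :
    tder x a t = fderiv ℝ x (a, t) (0, 1) := by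
  have hc : HasDerivAt (fun s : ℝ => ((a, s) : V3 × ℝ)) ((0 : V3), (1 : ℝ)) t :=
    (hasDerivAt_const t a).prodMk (hasDerivAt_id t)
  have h := (hx (a, t)).hasFDerivAt.comp_hasDerivAt t hc
  exact h.deriv


/-- circulation form of Cauchy's invariants: if the Weber form
`∑ₖ ẋₖ ∇ᴸxₖ = v₀ - ∇ᴸW` holds, then the Eulerian circulation around any transported
closed loop equals the initial circulation. -/
theorem circulation_theorem_of_weber_form
    (x : V3 × ℝ → V3) (W : V3 × ℝ → ℝ)
    (hx : ContDiff ℝ (⊤ : ℕ∞) x) (hW : ContDiff ℝ (⊤ : ℕ∞) W)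
    (hweber : ∀ (a : V3) (t : ℝ),
      (∑ k : Fin 3, tder x a t k • grad3 (fun b => x (b, t) k) a)
        = tder x a 0 - grad3 (fun b => W (b, t)) a) :
    ∀ γ : ℝ → V3, ContDiff ℝ 1 γ → γ 0 = γ 1 →
      ∀ t : ℝ,
        (∫ s in (0:ℝ)..1, tder x (γ s) t ⬝ᵥ deriv (fun s' => x (γ s', t)) s)
          = ∫ s in (0:ℝ)..1, tder x (γ s) 0 ⬝ᵥ deriv γ s := by
  intro γ hγ hclosed t
  have hxd : Differentiable ℝ x := hx.differentiable (by simp)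
  have hWd : Differentiable ℝ W := hW.differentiable (by simp)
  have hγd : Differentiable ℝ γ := hγ.differentiable one_ne_zero
  -- differentiability of slices
  have hxt : ∀ a : V3, DifferentiableAt ℝ (fun b : V3 => x (b, t)) a := fun a =>
    (hxd (a, t)).comp a (differentiableAt_id.prodMk (differentiableAt_const t))
  have hWt : ∀ a : V3, DifferentiableAt ℝ (fun b : V3 => W (b, t)) a := fun a =>
    (hWd (a, t)).comp a (differentiableAt_id.prodMk (differentiableAt_const t))
  -- key pointwise identity
  have key : ∀ s : ℝ,
      tder x (γ s) t ⬝ᵥ deriv (fun s' => x (γ s', t)) s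
        = tder x (γ s) 0 ⬝ᵥ deriv γ s
          - fderiv ℝ (fun b : V3 => W (b, t)) (γ s) (deriv γ s) := by
    intro s
    have hγs : HasDerivAt γ (deriv γ s) s := (hγd s).hasDerivAt
    have hD : HasDerivAt (fun s' => x (γ s', t))
        (fun i => fderiv ℝ (fun b : V3 => x (b, t) i) (γ s) (deriv γ s)) s := by
      refine hasDerivAt_pi.mpr fun i => ?_
      have hxi : DifferentiableAt ℝ (fun b : V3 => x (b, t) i) (γ s) :=
        (differentiableAt_pi.mp (hxt (γ s))) i
      exact hxi.hasFDerivAt.comp_hasDerivAt s hγs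
    rw [hD.deriv]
    have sum_dot : ∀ (c : Fin 3 → ℝ) (g : Fin 3 → V3) (v : V3),
        (∑ k, c k • g k) ⬝ᵥ v = ∑ k, c k * (g k ⬝ᵥ v) := by
      intro c g v
      simp only [dotProduct, Finset.sum_apply, Pi.smul_apply, smul_eq_mul,
        Finset.sum_mul, Finset.mul_sum, mul_assoc]
      exact Finset.sum_comm
    have step1 : tder x (γ s) t ⬝ᵥ
        (fun i => fderiv ℝ (fun b : V3 => x (b, t) i) (γ s) (deriv γ s))
        = (∑ k : Fin 3, tder x (γ s) t k • grad3 (fun b => x (b, t) k) (γ s)) ⬝ᵥ deriv γ s := by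
      rw [sum_dot]
      simp only [grad3_dot]
      simp [dotProduct]
    rw [step1, hweber, sub_dotProduct, grad3_dot]
  have hderivγ_cont : Continuous (deriv γ) := hγ.continuous_deriv le_rfl
  have hv0_cont : Continuous fun s => tder x (γ s) 0 ⬝ᵥ deriv γ s := by
    have h1 : Continuous fun a : V3 => tder x a 0 := by
      have : (fun a : V3 => tder x a 0) = fun a => fderiv ℝ x (a, 0) ((0 : V3), (1 : ℝ)) := by
        funext a; exact tder_eq x hxd a 0
      rw [this]
      exact ((hx.continuous_fderiv (by simp)).comp
        (continuous_id.prodMk continuous_const)).clm_apply continuous_const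
    unfold dotProduct
    exact continuous_finset_sum _ fun i _ =>
      ((continuous_apply i).comp (h1.comp hγ.continuous)).mul
        ((continuous_apply i).comp hderivγ_cont)
  have hg_cont : Continuous fun s => fderiv ℝ (fun b : V3 => W (b, t)) (γ s) (deriv γ s) := by
    have hWslice : ContDiff ℝ (⊤ : ℕ∞) fun b : V3 => W (b, t) :=
      hW.comp (contDiff_id.prodMk contDiff_const)
    exact ((hWslice.continuous_fderiv (by simp)).comp hγ.continuous).clm_apply hderivγ_cont
  calc (∫ s in (0:ℝ)..1, tder x (γ s) t ⬝ᵥ deriv (fun s' => x (γ s', t)) s)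
      = ∫ s in (0:ℝ)..1, (tder x (γ s) 0 ⬝ᵥ deriv γ s
          - fderiv ℝ (fun b : V3 => W (b, t)) (γ s) (deriv γ s)) := by
        exact intervalIntegral.integral_congr fun s _ => key s
    _ = (∫ s in (0:ℝ)..1, tder x (γ s) 0 ⬝ᵥ deriv γ s)
          - ∫ s in (0:ℝ)..1, fderiv ℝ (fun b : V3 => W (b, t)) (γ s) (deriv γ s) :=
        intervalIntegral.integral_sub (hv0_cont.intervalIntegrable 0 1)
          (hg_cont.intervalIntegrable 0 1)
    _ = ∫ s in (0:ℝ)..1, tder x (γ s) 0 ⬝ᵥ deriv γ s := by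
        have hFTC : (∫ s in (0:ℝ)..1, fderiv ℝ (fun b : V3 => W (b, t)) (γ s) (deriv γ s))
            = W (γ 1, t) - W (γ 0, t) := by
          refine intervalIntegral.integral_eq_sub_of_hasDerivAt (f := fun s => W (γ s, t)) (fun s _ => ?_)
            (hg_cont.intervalIntegrable 0 1)
          exact (hWt (γ s)).hasFDerivAt.comp_hasDerivAt s (hγd s).hasDerivAt
        rw [hFTC, hclosed, sub_self, sub_zero]
end
end
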